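/- σ_A² ≤ σ_B², and equality σ_A² = σ_B² holds if and only if for every z ∈ 𝒵 both β(z) = {π_s β_t(z) + π_t β_s(z)}/(π_s + π_t) and (1 − π_t − π_s)(β_t(z) − β_s(z)) = 0. -/

import Mathlib

/-! Within a stratum, `β_t(z)` solves the normal equations `Σ(z) β_t(z) = cov(X, Y^{(t)} | Z = z)`,
so for every `b` the residual variance splits as
`var(Y^{(t)} - Xᵀb) = var(Y^{(t)} - Xᵀβ_t) + (b - β_t)ᵀ Σ (b - β_t)`.
Hence `σ_B² - σ_A² = E[Q(u)/π_t + Q(v)/π_s - Q(v - u)]`, where `Q` is the quadratic form of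
`Σ(Z)`, `u = β - β_t` and `v = β - β_s`. The identity
`Q(u)/p + Q(v)/q - Q(v - u) = Q(q u + p v)/(p q (p + q)) + (1 - p - q)/(p + q) Q(v - u)`
writes this as a sum of nonnegative terms, which vanish exactly under the stated conditions. -/

open MeasureTheory ProbabilityTheory Matrix
open scoped ProbabilityTheory

lemma smul_sub_add_smul_sub_eq_zero_iff {K V : Type*} [Field K] [AddCommGroup V] [Module K V]
    {a b : K} (hab : a + b ≠ 0) (x y z : V) :
    a • (x - y) + b • (x - z) = 0 ↔ x = (a + b)⁻¹ • (a • y + b • z) := by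
  have : a • (x - y) + b • (x - z) = (a + b) • x - (a • y + b • z) := by module
  rw [this, sub_eq_zero, eq_inv_smul_iff₀ hab]

lemma Matrix.IsSymm.dotProduct_mulVec_comm {R n : Type*} [CommSemiring R] [Fintype n]
    {A : Matrix n n R} (hA : A.IsSymm) (v w : n → R) :
    v ⬝ᵥ (A *ᵥ w) = w ⬝ᵥ (A *ᵥ v) := by
  rw [dotProduct_mulVec, ← mulVec_transpose, hA.eq, dotProduct_comm]

lemma Matrix.IsSymm.dotProduct_mulVec_sub {R n : Type*} [CommRing R] [Fintype n]
    {A : Matrix n n R} (hA : A.IsSymm) (v w : n → R) :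
    (v - w) ⬝ᵥ (A *ᵥ (v - w))
      = v ⬝ᵥ (A *ᵥ v) - 2 * (v ⬝ᵥ (A *ᵥ w)) + w ⬝ᵥ (A *ᵥ w) := by
  rw [mulVec_sub, sub_dotProduct, dotProduct_sub, dotProduct_sub, hA.dotProduct_mulVec_comm w v]
  ring

lemma Matrix.toQuadraticForm'_apply {R n : Type*} [CommRing R] [Fintype n] [DecidableEq n]
    (M : Matrix n n R) (x : n → R) : M.toQuadraticForm' x = x ⬝ᵥ (M *ᵥ x) := by
  simp [Matrix.toQuadraticForm', toLinearMap₂'_apply']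

namespace QuadraticMap

variable {K V : Type*} [Field K] [AddCommGroup V] [Module K V]

lemma div_add_div_sub_map_sub_eq (Q : QuadraticForm K V) {p q : K} (hp : p ≠ 0) (hq : q ≠ 0)
    (hpq : p + q ≠ 0) (u v : V) :
    Q u / p + Q v / q - Q (v - u)
      = Q (q • u + p • v) / (p * q * (p + q)) + (1 - p - q) / (p + q) * Q (v - u) := by
  have hsub : Q (v - u) = Q v + Q u - polar Q v u := by
    rw [sub_eq_add_neg, QuadraticMap.map_add Q, polar_neg_right, QuadraticMap.map_neg]; ring
  have hcomb : Q (q • u + p • v) = q * q * Q u + p * p * Q v + q * p * polar Q v u := by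
    rw [QuadraticMap.map_add Q, QuadraticMap.map_smul, QuadraticMap.map_smul, polar_smul_left,
      polar_smul_right, polar_comm]
    simp only [smul_eq_mul]; ring
  rw [hsub, hcomb]
  field_simp
  ring

end QuadraticMap

namespace QuadraticMap.PosDef

variable {K V : Type*} [Field K] [LinearOrder K] [IsStrictOrderedRing K]
  [AddCommGroup V] [Module K V] {Q : QuadraticForm K V}

lemma div_add_div_sub_map_sub_nonneg (hQ : Q.PosDef) {p q : K} (hp : 0 < p) (hq : 0 < q)
    (hpq : p + q ≤ 1) (u v : V) :
    0 ≤ Q u / p + Q v / q - Q (v - u) := by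
  rw [Q.div_add_div_sub_map_sub_eq hp.ne' hq.ne' (by positivity)]
  have hc : 0 ≤ 1 - p - q := by linarith
  exact add_nonneg (div_nonneg (hQ.nonneg _) (by positivity))
    (mul_nonneg (div_nonneg hc (by positivity)) (hQ.nonneg _))

lemma div_add_div_sub_map_sub_eq_zero_iff (hQ : Q.PosDef) {p q : K} (hp : 0 < p) (hq : 0 < q)
    (hpq : p + q ≤ 1) (u v : V) :
    Q u / p + Q v / q - Q (v - u) = 0 ↔ q • u + p • v = 0 ∧ (1 - p - q) • (v - u) = 0 := by
  have hc : 0 ≤ 1 - p - q := by linarith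
  have hden : p * q * (p + q) ≠ 0 := by positivity
  have hsum : 0 < p + q := by positivity
  rw [Q.div_add_div_sub_map_sub_eq hp.ne' hq.ne' hsum.ne',
    add_eq_zero_iff_of_nonneg (div_nonneg (hQ.nonneg _) (by positivity))
      (mul_nonneg (div_nonneg hc hsum.le) (hQ.nonneg _)),
    div_eq_zero_iff, or_iff_left hden, mul_eq_zero, div_eq_zero_iff, or_iff_left hsum.ne',
    smul_eq_zero, hQ.anisotropic.eq_zero_iff, hQ.anisotropic.eq_zero_iff]

end QuadraticMap.PosDef

lemma MeasureTheory.MemLp.cond {Ω E : Type*} [MeasurableSpace Ω] [NormedAddCommGroup E]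
    {μ : Measure Ω} {f : Ω → E} {p : ENNReal} (hf : MemLp f p μ) {s : Set Ω} (hs : μ s ≠ 0) :
    MemLp f p μ[|s] :=
  (hf.restrict s).smul_measure (ENNReal.inv_ne_top.mpr hs)

namespace ProbabilityTheory

variable {Ω ι : Type*} [MeasurableSpace Ω] {μ : Measure Ω} {f : Ω → ℝ} {X : Ω → ι → ℝ}

noncomputable def covMatrix (X : Ω → ι → ℝ) (μ : Measure Ω) : Matrix ι ι ℝ :=
  Matrix.of fun j l => cov[fun ω => X ω j, fun ω => X ω l; μ]

noncomputable def crossCov (X : Ω → ι → ℝ) (f : Ω → ℝ) (μ : Measure Ω) : ι → ℝ :=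
  fun j => cov[fun ω => X ω j, f; μ]

lemma covMatrix_apply_eq_sub [IsProbabilityMeasure μ] (hX : ∀ j, MemLp (fun ω => X ω j) 2 μ)
    (j l : ι) :
    covMatrix X μ j l = ∫ ω, X ω j * X ω l ∂μ - (∫ ω, X ω j ∂μ) * (∫ ω, X ω l ∂μ) :=
  covariance_eq_sub (hX j) (hX l)

lemma crossCov_apply_eq_sub [IsProbabilityMeasure μ] (hX : ∀ j, MemLp (fun ω => X ω j) 2 μ)
    (hf : MemLp f 2 μ) (j : ι) :
    crossCov X f μ j = ∫ ω, X ω j * f ω ∂μ - (∫ ω, X ω j ∂μ) * (∫ ω, f ω ∂μ) :=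
  covariance_eq_sub (hX j) hf

lemma covMatrix_isSymm (X : Ω → ι → ℝ) (μ : Measure Ω) : (covMatrix X μ).IsSymm :=
  Matrix.IsSymm.ext fun _ _ => covariance_comm _ _

variable [Fintype ι] [IsFiniteMeasure μ]

lemma variance_sub_sum_mul (hf : MemLp f 2 μ) (hX : ∀ j, MemLp (fun ω => X ω j) 2 μ)
    (b : ι → ℝ) :
    Var[fun ω => f ω - ∑ j, X ω j * b j; μ]
      = Var[f; μ] - 2 * (b ⬝ᵥ crossCov X f μ) + b ⬝ᵥ (covMatrix X μ *ᵥ b) := by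
  have hXb : ∀ j, MemLp (fun ω => X ω j * b j) 2 μ := fun j => (hX j).mul_const (b j)
  rw [variance_fun_sub hf (memLp_finsetSum _ fun j _ => hXb j), variance_fun_sum hXb,
    covariance_fun_sum_right hXb hf]
  simp only [covariance_mul_const_left, covariance_mul_const_right, covariance_comm f,
    dotProduct, mulVec, crossCov, covMatrix, of_apply, Finset.mul_sum]
  congr 1
  · congr 1; exact Finset.sum_congr rfl fun j _ => by ring
  · exact Finset.sum_congr rfl fun j _ => Finset.sum_congr rfl fun l _ => by ring

lemma variance_sub_sum_mul_eq_add (hf : MemLp f 2 μ) (hX : ∀ j, MemLp (fun ω => X ω j) 2 μ)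
    {β : ι → ℝ} (hβ : covMatrix X μ *ᵥ β = crossCov X f μ) (b : ι → ℝ) :
    Var[fun ω => f ω - ∑ j, X ω j * b j; μ]
      = Var[fun ω => f ω - ∑ j, X ω j * β j; μ] + (b - β) ⬝ᵥ (covMatrix X μ *ᵥ (b - β)) := by
  rw [variance_sub_sum_mul hf hX, variance_sub_sum_mul hf hX,
    (covMatrix_isSymm X μ).dotProduct_mulVec_sub, ← hβ]
  ring

end ProbabilityTheory

theorem stmt6_general {Ω : Type*} [MeasurableSpace Ω] (P : Measure Ω) [IsProbabilityMeasure P]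
    {𝓩 : Type*} [Fintype 𝓩]
    {k d : ℕ}
    (π : Fin k → ℝ) (hπ : ∀ t, π t ∈ Set.Ioo (0 : ℝ) 1) (hπsum : ∑ t, π t = 1)
    (Y : Fin k → Ω → ℝ)
    (hY2 : ∀ t, MemLp (Y t) 2 P)
    (Z : Ω → 𝓩)
    (hZpos : ∀ z, 0 < P {ω | Z ω = z})
    (X : Ω → Fin d → ℝ)
    (hX2 : ∀ j, MemLp (fun ω => X ω j) 2 P)
    -- conditional measures and stratum probabilities
    (condP : 𝓩 → Measure Ω) (hcondP : ∀ z, condP z = P[|{ω | Z ω = z}])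
    (pz : 𝓩 → ℝ) (hpz : ∀ z, pz z = (P {ω | Z ω = z}).toReal)
    -- conditional covariance matrices, assumed positive definite
    (Smat : 𝓩 → Matrix (Fin d) (Fin d) ℝ)
    (hSmat : ∀ z j l, Smat z j l
      = ∫ ω, X ω j * X ω l ∂(condP z)
        - (∫ ω, X ω j ∂(condP z)) * (∫ ω, X ω l ∂(condP z)))
    (hSpd : ∀ z, (Smat z).PosDef)
    -- projection coefficients
    (β : Fin k → 𝓩 → Fin d → ℝ)
    (hβ : ∀ t z, β t z = (Smat z)⁻¹ *ᵥ fun j =>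
      ∫ ω, X ω j * Y t ω ∂(condP z)
        - (∫ ω, X ω j ∂(condP z)) * (∫ ω, Y t ω ∂(condP z)))
    (βb : 𝓩 → Fin d → ℝ)
    -- the two fixed treatments
    (tt ss : Fin k) (hts : tt ≠ ss)
    -- the asymptotic variance components
    (σA2 σB2 : ℝ)
    (hσA2 : σA2
      = (∑ z, pz z *
          (variance (fun ω => Y tt ω - ∑ j, X ω j * β tt z j) (condP z) / π tt
            + variance (fun ω => Y ss ω - ∑ j, X ω j * β ss z j) (condP z) / π ss))
        + ∑ z, pz z *
            ((β tt z - β ss z) ⬝ᵥ (Smat z *ᵥ (β tt z - β ss z))))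
    (hσB2 : σB2 = ∑ z, pz z *
      (variance (fun ω => Y tt ω - ∑ j, X ω j * βb z j) (condP z) / π tt
        + variance (fun ω => Y ss ω - ∑ j, X ω j * βb z j) (condP z) / π ss)) :
    σA2 ≤ σB2 ∧
      (σA2 = σB2 ↔ ∀ z,
        βb z = (π ss + π tt)⁻¹ • (π ss • β tt z + π tt • β ss z)
          ∧ (1 - π tt - π ss) • (β tt z - β ss z) = 0) := by
  obtain ⟨hπt, -⟩ := hπ tt
  obtain ⟨hπs, -⟩ := hπ ss
  have hπts : π tt + π ss ≤ 1 := by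
    rw [← hπsum, ← Finset.sum_pair hts]
    exact Finset.sum_le_univ_sum_of_nonneg fun t => (hπ t).1.le
  have hP z : P {ω | Z ω = z} ≠ 0 := (hZpos z).ne'
  have hpz_pos z : 0 < pz z := hpz z ▸ ENNReal.toReal_pos (hP z) (measure_ne_top P _)
  have hprob z : IsProbabilityMeasure (condP z) := hcondP z ▸ cond_isProbabilityMeasure (hP z)
  have hYc t z : MemLp (Y t) 2 (condP z) := hcondP z ▸ (hY2 t).cond (hP z)
  have hXc z j : MemLp (fun ω => X ω j) 2 (condP z) := hcondP z ▸ (hX2 j).cond (hP z)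
  have hSmat_eq z : Smat z = covMatrix X (condP z) := by
    ext j l
    rw [hSmat, covMatrix_apply_eq_sub (hXc z)]
  have hnormal t z : covMatrix X (condP z) *ᵥ β t z = crossCov X (Y t) (condP z) := by
    rw [← hSmat_eq, hβ, mulVec_mulVec, mul_nonsing_inv _ (hSpd z).det_pos.ne'.isUnit,
      one_mulVec]
    exact funext fun j => (crossCov_apply_eq_sub (hXc z) (hYc t z) j).symm
  obtain ⟨gap, hgap⟩ : ∃ gap : 𝓩 → ℝ, ∀ z, gap z =
      (Smat z).toQuadraticForm' (βb z - β tt z) / π tt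
        + (Smat z).toQuadraticForm' (βb z - β ss z) / π ss
        - (Smat z).toQuadraticForm' ((βb z - β ss z) - (βb z - β tt z)) := ⟨_, fun _ => rfl⟩
  have hσ : σB2 = σA2 + ∑ z, pz z * gap z := by
    rw [hσA2, hσB2, add_assoc, ← Finset.sum_add_distrib, ← Finset.sum_add_distrib]
    refine Finset.sum_congr rfl fun z _ => ?_
    rw [variance_sub_sum_mul_eq_add (hYc tt z) (hXc z) (hnormal tt z),
      variance_sub_sum_mul_eq_add (hYc ss z) (hXc z) (hnormal ss z), ← hSmat_eq, hgap,
      sub_sub_sub_cancel_left]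
    simp only [toQuadraticForm'_apply]
    ring
  have hterm_nonneg z : 0 ≤ pz z * gap z := mul_nonneg (hpz_pos z).le <|
    hgap z ▸ (hSpd z).toQuadraticForm'.div_add_div_sub_map_sub_nonneg hπt hπs hπts _ _
  refine ⟨?_, ?_⟩
  · rw [hσ, le_add_iff_nonneg_right]
    exact Finset.sum_nonneg fun z _ => hterm_nonneg z
  · rw [hσ, left_eq_add, Finset.sum_eq_zero_iff_of_nonneg fun z _ => hterm_nonneg z]
    refine forall_congr' fun z => ?_
    rw [imp_iff_right (Finset.mem_univ z), mul_eq_zero, or_iff_right (hpz_pos z).ne', hgap,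
      (hSpd z).toQuadraticForm'.div_add_div_sub_map_sub_eq_zero_iff hπt hπs hπts,
      smul_sub_add_smul_sub_eq_zero_iff (by positivity), sub_sub_sub_cancel_left]

/-- In the population setup, `σA² ≤ σB²`, with equality iff for every
stratum `z` both `β̄(z) = (πs β_t(z) + πt β_s(z))/(πs + πt)` and
`(1 − πt − πs)(β_t(z) − β_s(z)) = 0`. -/
theorem stmt6 {Ω : Type*} [MeasurableSpace Ω] (P : Measure Ω) [IsProbabilityMeasure P]
    {𝓦 : Type*} [MeasurableSpace 𝓦]
    {𝓩 : Type*} [Fintype 𝓩] [MeasurableSpace 𝓩] [MeasurableSingletonClass 𝓩]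
    {k d : ℕ} (hk : 2 ≤ k)
    (π : Fin k → ℝ) (hπ : ∀ t, π t ∈ Set.Ioo (0 : ℝ) 1) (hπsum : ∑ t, π t = 1)
    (Y : Fin k → Ω → ℝ) (W : Ω → 𝓦)
    (hYmeas : ∀ t, Measurable (Y t)) (hWmeas : Measurable W)
    (hY2 : ∀ t, MemLp (Y t) 2 P)
    (g : 𝓦 → 𝓩) (hg : Measurable g)
    (Z : Ω → 𝓩) (hZdef : ∀ ω, Z ω = g (W ω))
    (hZpos : ∀ z, 0 < P {ω | Z ω = z})
    (h : 𝓦 → Fin d → ℝ) (hh : Measurable h)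
    (X : Ω → Fin d → ℝ) (hXdef : ∀ ω, X ω = h (W ω))
    (hX2 : ∀ j, MemLp (fun ω => X ω j) 2 P)
    (hXY2 : ∀ t j, MemLp (fun ω => X ω j * Y t ω) 2 P)
    -- conditional measures and stratum probabilities
    (condP : 𝓩 → Measure Ω) (hcondP : ∀ z, condP z = P[|{ω | Z ω = z}])
    (pz : 𝓩 → ℝ) (hpz : ∀ z, pz z = (P {ω | Z ω = z}).toReal)
    -- conditional covariance matrices, assumed positive definite
    (Smat : 𝓩 → Matrix (Fin d) (Fin d) ℝ)
    (hSmat : ∀ z j l, Smat z j l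
      = ∫ ω, X ω j * X ω l ∂(condP z)
        - (∫ ω, X ω j ∂(condP z)) * (∫ ω, X ω l ∂(condP z)))
    (hSpd : ∀ z, (Smat z).PosDef)
    -- projection coefficients
    (β : Fin k → 𝓩 → Fin d → ℝ)
    (hβ : ∀ t z, β t z = (Smat z)⁻¹ *ᵥ fun j =>
      ∫ ω, X ω j * Y t ω ∂(condP z)
        - (∫ ω, X ω j ∂(condP z)) * (∫ ω, Y t ω ∂(condP z)))
    (βb : 𝓩 → Fin d → ℝ) (hβb : ∀ z, βb z = ∑ ℓ, π ℓ • β ℓ z)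
    -- the two fixed treatments
    (tt ss : Fin k) (hts : tt ≠ ss)
    -- the asymptotic variance components
    (σA2 σB2 : ℝ)
    (hσA2 : σA2
      = (∑ z, pz z *
          (variance (fun ω => Y tt ω - ∑ j, X ω j * β tt z j) (condP z) / π tt
            + variance (fun ω => Y ss ω - ∑ j, X ω j * β ss z j) (condP z) / π ss))
        + ∑ z, pz z *
            ((β tt z - β ss z) ⬝ᵥ (Smat z *ᵥ (β tt z - β ss z))))
    (hσB2 : σB2 = ∑ z, pz z *
      (variance (fun ω => Y tt ω - ∑ j, X ω j * βb z j) (condP z) / π tt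
        + variance (fun ω => Y ss ω - ∑ j, X ω j * βb z j) (condP z) / π ss)) :
    σA2 ≤ σB2 ∧
      (σA2 = σB2 ↔ ∀ z,
        βb z = (π ss + π tt)⁻¹ • (π ss • β tt z + π tt • β ss z)
          ∧ (1 - π tt - π ss) • (β tt z - β ss z) = 0) :=
  stmt6_general P π hπ hπsum Y hY2 Z hZpos X hX2 condP hcondP pz hpz Smat hSmat hSpd β hβ βb tt ss
    hts σA2 σB2 hσA2 hσB2
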